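/- arXiv:1702.08592 — 5 statements merged into one kernel-verified Lean document; each statement's English description precedes it below -/
import Mathlib

section
/- Let I be a finite index set and for each y ∈ I let τ_y, σ_y be real numbers with τ_y < σ_y and 0 < σ_y. Let f : ℝ × ℝ → ℝ be continuously differentiable, and let t ≥ 0. Then ∑_{y∈I} f(t−τ_y, t)·𝟙[τ_y ≤ t < σ_y] = ∑_{y∈I} f(−τ_y, 0)·𝟙[τ_y < 0] + ∫_0^t ( ∑_{y∈I} (∂₁f(s−τ_y, s) + ∂₂f(s−τ_y, s))·𝟙[τ_y ≤ s < σ_y] ) ds + ∑_{y∈I} f(0, τ_y)·𝟙[0 ≤ τ_y ≤ t] − ∑_{y∈I} f(σ_y−τ_y, σ_y)·𝟙[σ_y ≤ t]. -/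
/-!
Each individual contributes separately, and for one individual born at `τ` and dying at `σ`
the identity is the fundamental theorem of calculus for `g s = f (s - τ, s)` on the part
`[max 0 τ, min t σ]` of `[0, t]` during which it is alive: `g (min t σ)` is either the current
value or the death term, and `g (max 0 τ)` is either the initial value or the birth term.
-/

open MeasureTheory Set

theorem indicator_Ico_eq_ite {α M : Type*} [LinearOrder α] [Zero M] (c d : α) (G : α → M) :
    (Ico c d).indicator G = fun s => if c ≤ s ∧ s < d then G s else 0 := by
  ext s
  simp only [indicator_apply, mem_Ico]

section

variable {E : Type*} [NormedAddCommGroup E]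

theorem intervalIntegral_indicator_Ico [NormedSpace ℝ E] {a b : ℝ} (hab : a ≤ b) (c d : ℝ)
    (G : ℝ → E) :
    ∫ s in a..b, (Ico c d).indicator G s = ∫ s in Ioc (max a c) (min b d), G s := by
  rw [intervalIntegral.integral_of_le hab, integral_indicator measurableSet_Ico,
    Measure.restrict_restrict measurableSet_Ico,
    setIntegral_congr_set ((Ico_ae_eq_Ioc (μ := volume)).inter (ae_eq_refl (Ioc a b))),
    Ioc_inter_Ioc, sup_comm, inf_comm]

theorem IntervalIntegrable.indicator {μ : Measure ℝ} {G : ℝ → E} {a b : ℝ}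
    (hG : IntervalIntegrable G μ a b) {S : Set ℝ} (hS : MeasurableSet S) :
    IntervalIntegrable (S.indicator G) μ a b := by
  rw [intervalIntegrable_iff] at hG ⊢
  exact hG.indicator hS

theorem HasFDerivAt.hasDerivAt_sub_const_prodMk [NormedSpace ℝ E] {f : ℝ × ℝ → E}
    {f' : ℝ × ℝ →L[ℝ] E} {τ s : ℝ} (hf : HasFDerivAt f f' (s - τ, s)) :
    HasDerivAt (fun s => f (s - τ, s)) (f' (1, 0) + f' (0, 1)) s := by
  rw [← map_add, Prod.mk_add_mk, add_zero, zero_add]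
  exact hf.comp_hasDerivAt (f := fun s => (s - τ, s)) s
    (((hasDerivAt_id s).sub_const τ).prodMk (hasDerivAt_id s))

theorem ContDiff.continuous_fderiv_sub_const_prodMk [NormedSpace ℝ E] {f : ℝ × ℝ → E}
    (hf : ContDiff ℝ 1 f) (τ : ℝ) :
    Continuous fun s => fderiv ℝ f (s - τ, s) (1, 0) + fderiv ℝ f (s - τ, s) (0, 1) := by
  have hc : Continuous fun s : ℝ => fderiv ℝ f (s - τ, s) :=
    (hf.continuous_fderiv one_ne_zero).comp ((continuous_id.sub continuous_const).prodMk
      continuous_id)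
  exact (hc.clm_apply continuous_const).add (hc.clm_apply continuous_const)

theorem single_individual_evolution [NormedSpace ℝ E] [CompleteSpace E] {g g' : ℝ → E}
    (hg : ∀ s, HasDerivAt g (g' s) s) (hg' : Continuous g') {τ σ t : ℝ} (hτσ : τ < σ)
    (hσ : 0 < σ) (ht : 0 ≤ t) :
    (if τ ≤ t ∧ t < σ then g t else 0)
      = (if τ < 0 then g 0 else 0) + (∫ s in (0:ℝ)..t, if τ ≤ s ∧ s < σ then g' s else 0)
        + (if 0 ≤ τ ∧ τ ≤ t then g τ else 0) - (if σ ≤ t then g σ else 0) := by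
  rw [← indicator_Ico_eq_ite, intervalIntegral_indicator_Ico ht]
  rcases lt_or_ge t τ with htτ | hτt
  · have hdead : min t σ < max 0 τ :=
      (min_le_left t σ).trans_lt (htτ.trans_le (le_max_right 0 τ))
    rw [Ioc_eq_empty hdead.not_gt, setIntegral_empty]
    simp [not_le.2 htτ, (ht.trans_lt htτ).not_gt, not_le.2 (htτ.trans hτσ)]
  have hlive : max 0 τ ≤ min t σ := max_le (le_min ht hσ.le) (le_min hτt hτσ.le)
  rw [← intervalIntegral.integral_of_le hlive,
    intervalIntegral.integral_eq_sub_of_hasDerivAt (fun s _ => hg s) (hg'.intervalIntegrable _ _)]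
  rcases lt_or_ge t σ with htσ | hσt <;> rcases lt_or_ge τ 0 with hτ0 | hτ0
  · simp [hτt, htσ, htσ.not_ge, hτ0, hτ0.not_ge, min_eq_left htσ.le, max_eq_left hτ0.le]
  · simp [hτt, htσ, htσ.not_ge, hτ0, hτ0.not_gt, min_eq_left htσ.le]
  · simp [hτt, hσt, hσt.not_gt, hτ0, hτ0.not_ge, max_eq_left hτ0.le]
  · simp [hτt, hσt, hσt.not_gt, hτ0, hτ0.not_gt]

end

/-- Pathwise fundamental evolution equation for the age structure of a finite
population: each individual `y` is born at `τ y`, dies at `σ y`, and its age at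
time `t` is `t - τ y`.  `∂₁f`, `∂₂f` are expressed via `fderiv` applied to the
coordinate directions. -/
theorem stmt0 {ι : Type*} (I : Finset ι) (τ σ : ι → ℝ)
    (hτσ : ∀ y ∈ I, τ y < σ y) (hσ : ∀ y ∈ I, 0 < σ y)
    (f : ℝ × ℝ → ℝ) (hf : ContDiff ℝ 1 f) (t : ℝ) (ht : 0 ≤ t) :
    ∑ y ∈ I, (if τ y ≤ t ∧ t < σ y then f (t - τ y, t) else 0)
      = ∑ y ∈ I, (if τ y < 0 then f (-τ y, 0) else 0)
        + (∫ s in (0:ℝ)..t, ∑ y ∈ I,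
            (if τ y ≤ s ∧ s < σ y then
              fderiv ℝ f (s - τ y, s) (1, 0) + fderiv ℝ f (s - τ y, s) (0, 1) else 0))
        + ∑ y ∈ I, (if 0 ≤ τ y ∧ τ y ≤ t then f (0, τ y) else 0)
        - ∑ y ∈ I, (if σ y ≤ t then f (σ y - τ y, σ y) else 0) := by
  have hderiv (a s : ℝ) := ((hf.differentiable one_ne_zero) (s - a, s)).hasFDerivAt
    |>.hasDerivAt_sub_const_prodMk
  have hcont (a : ℝ) := hf.continuous_fderiv_sub_const_prodMk a
  have hint (y : ι) := ((hcont (τ y)).intervalIntegrable (μ := volume) 0 t).indicator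
    (measurableSet_Ico (a := τ y) (b := σ y))
  simp only [indicator_Ico_eq_ite] at hint
  rw [intervalIntegral.integral_finsetSum fun y _ => hint y, ← Finset.sum_add_distrib,
    ← Finset.sum_add_distrib, ← Finset.sum_sub_distrib]
  refine Finset.sum_congr rfl fun y hy => ?_
  simpa only [zero_sub, sub_self] using
    single_individual_evolution (hderiv (τ y)) (hcont (τ y)) (hτσ y hy) (hσ y hy) ht
end

section
/- Let g : ℝ → ℝ be continuously differentiable and let τ, σ, t be real numbers with τ < σ, 0 < σ and 0 ≤ t. Then g(t)·𝟙[τ ≤ t < σ] − g(0)·𝟙[τ < 0] = ∫_0^t g'(s)·𝟙[τ ≤ s < σ] ds + g(τ)·𝟙[0 ≤ τ ≤ t] − g(σ)·𝟙[σ ≤ t]. -/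
/-!
On `[0, t]` the indicator of `[τ, σ)` cuts the integral down to `(max 0 τ, min t σ]`, where the
fundamental theorem of calculus evaluates it to `g (min t σ) - g (max 0 τ)`; the identity then
follows by comparing the positions of `τ` and `σ` with `0` and `t`.
-/

open MeasureTheory Set

theorem intervalIntegral_indicator_Ico_eq_setIntegral_Ioc {f : ℝ → ℝ} {a b : ℝ} (hab : a ≤ b)
    (c d : ℝ) :
    ∫ s in a..b, (Ico c d).indicator f s = ∫ s in Ioc (max a c) (min b d), f s := by
  rw [intervalIntegral.integral_of_le hab, setIntegral_indicator measurableSet_Ico,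
    setIntegral_congr_set (ae_eq_set_inter (ae_eq_refl (Ioc a b)) (Ico_ae_eq_Ioc (μ := volume))),
    Ioc_inter_Ioc]

theorem setIntegral_Ioc_deriv_eq_sub {g : ℝ → ℝ} (hg : ContDiff ℝ 1 g) {a b : ℝ} (hab : a ≤ b) :
    ∫ s in Ioc a b, deriv g s = g b - g a := by
  rw [← intervalIntegral.integral_of_le hab]
  exact intervalIntegral.integral_deriv_eq_sub (fun x _ => hg.differentiable one_ne_zero x)
    ((hg.continuous_deriv le_rfl).intervalIntegrable a b)

/-- Single-individual telescoping identity: for a C¹ function `g`, birth time `τ`,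
death time `σ` with `τ < σ`, `0 < σ`, and `0 ≤ t`,
`g(t)·𝟙[τ ≤ t < σ] − g(0)·𝟙[τ < 0]
  = ∫_0^t g'(s)·𝟙[τ ≤ s < σ] ds + g(τ)·𝟙[0 ≤ τ ≤ t] − g(σ)·𝟙[σ ≤ t]`. -/
theorem stmt1 (g : ℝ → ℝ) (hg : ContDiff ℝ 1 g) (τ σ t : ℝ)
    (hτσ : τ < σ) (hσ : 0 < σ) (ht : 0 ≤ t) :
    (if τ ≤ t ∧ t < σ then g t else 0) - (if τ < 0 then g 0 else 0)
      = (∫ s in (0:ℝ)..t, if τ ≤ s ∧ s < σ then deriv g s else 0)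
        + (if 0 ≤ τ ∧ τ ≤ t then g τ else 0)
        - (if σ ≤ t then g σ else 0) := by
  have hindicator : (fun s => if τ ≤ s ∧ s < σ then deriv g s else 0)
      = (Ico τ σ).indicator (deriv g) := by
    ext s
    simp [indicator]
  rw [hindicator, intervalIntegral_indicator_Ico_eq_setIntegral_Ioc ht]
  rcases le_or_gt τ t with hτt | htτ
  · rw [setIntegral_Ioc_deriv_eq_sub hg (max_le (le_min ht hσ.le) (le_min hτt hτσ.le))]
    grind
  · rw [Ioc_eq_empty ((min_le_left t σ).trans (htτ.le.trans (le_max_right 0 τ))).not_gt,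
      setIntegral_empty]
    grind
end

section
/- Fix an integer j ≥ 1 and T* > 0. There is a constant c > 0, depending only on T* and j, with the following property: for every t ∈ [0, T*) and every function φ : ℝ → ℝ that is j times continuously differentiable on [0, T*], there exists ψ : ℝ → ℝ such that (i) ψ(x) = φ(x + t) for all x ∈ [0, T* − t]; (ii) ψ is (j−1) times continuously differentiable on [0, T*] and is j times continuously differentiable on each of the subintervals [0, T* − t] and [T* − t, T*]; and (iii) ∑_{i=0}^{j} ( ∫_0^{T*−t} (ψ^{(i)}(x))² dx + ∫_{T*−t}^{T*} (ψ^{(i)}(x))² dx ) ≤ c · ‖φ‖_{W^j}², where on each subinterval ψ^{(i)} denotes the i-th derivative of ψ there. -/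
/-!
Write `a = T* - t`. Reflect the top derivative `φ^(j-1)(· + t)` about `a`, so that it becomes a
continuous function on `[0, T*]` which is `C¹` on each side of `a`, and integrate it back `j - 1`
times from `0`, with the initial values `φ^(k)(t)`. On `[0, a]` this reproduces `φ(· + t)`, so the
left-hand integrals are those of `φ`'s derivatives over `[t, T*]`. On `[a, T*]` the `j`-th
derivative is the reflection of `φ^(j)`, whose `L²` norm is at most that of `φ^(j)`; the lower
derivatives there are iterated integrals of functions that the one-dimensional Sobolev embedding
`f(y)² ≤ (1/L + 1) ‖f‖² + ‖f'‖²` bounds pointwise by the `W^j` norm of `φ`.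
-/

open Set MeasureTheory intervalIntegral
open scoped Pointwise

section Sobolev

variable {f f' : ℝ → ℝ} {a b : ℝ}

theorem abs_sq_sub_sq_le_integral (hf : ContinuousOn f (Icc a b))
    (hf' : ContinuousOn f' (Icc a b)) (hd : ∀ x ∈ Ioo a b, HasDerivAt f (f' x) x) {x y : ℝ}
    (hx : x ∈ Icc a b) (hy : y ∈ Icc a b) (hxy : x ≤ y) :
    |f y ^ 2 - f x ^ 2| ≤ ∫ z in a..b, (f z ^ 2 + f' z ^ 2) := by
  have hsub : Icc x y ⊆ Icc a b := Icc_subset_Icc hx.1 hy.2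
  have hprod : ContinuousOn (fun z => 2 * f z * f' z) (Icc x y) :=
    ((continuousOn_const.mul hf).mul hf').mono hsub
  have hsq : ContinuousOn (fun z => f z ^ 2 + f' z ^ 2) (Icc a b) := (hf.pow 2).add (hf'.pow 2)
  have hftc : ∫ z in x..y, 2 * f z * f' z = f y ^ 2 - f x ^ 2 := by
    refine integral_eq_sub_of_hasDerivAt_of_le hxy ((hf.mono hsub).pow 2) (fun z hz => ?_)
      (hprod.intervalIntegrable_of_Icc hxy)
    simpa [mul_comm, mul_assoc] using (hd z (Ioo_subset_Ioo hx.1 hy.2 hz)).pow 2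
  rw [← hftc]
  calc |∫ z in x..y, 2 * f z * f' z| ≤ ∫ z in x..y, |2 * f z * f' z| :=
        abs_integral_le_integral_abs hxy
    _ ≤ ∫ z in x..y, (f z ^ 2 + f' z ^ 2) := by
        refine integral_mono_on hxy (hprod.abs.intervalIntegrable_of_Icc hxy)
          ((hsq.mono hsub).intervalIntegrable_of_Icc hxy) fun z _ => abs_le.2 ⟨?_, ?_⟩
        · nlinarith [sq_nonneg (f z + f' z)]
        · nlinarith [sq_nonneg (f z - f' z)]
    _ ≤ ∫ z in a..b, (f z ^ 2 + f' z ^ 2) :=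
        integral_mono_interval hx.1 hxy hy.2 (Filter.Eventually.of_forall fun z => by positivity)
          (hsq.intervalIntegrable_of_Icc (hx.1.trans hx.2))

theorem sq_le_integral_sq_add_integral_deriv_sq (hab : a < b) (hf : ContinuousOn f (Icc a b))
    (hf' : ContinuousOn f' (Icc a b)) (hd : ∀ x ∈ Ioo a b, HasDerivAt f (f' x) x) {y : ℝ}
    (hy : y ∈ Icc a b) :
    f y ^ 2 ≤ ((b - a)⁻¹ + 1) * (∫ x in a..b, f x ^ 2) + ∫ x in a..b, f' x ^ 2 := by
  have hf2 : IntervalIntegrable (fun x => f x ^ 2) volume a b :=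
    (hf.pow 2).intervalIntegrable_of_Icc hab.le
  have hf'2 : IntervalIntegrable (fun x => f' x ^ 2) volume a b :=
    (hf'.pow 2).intervalIntegrable_of_Icc hab.le
  set R := ∫ x in a..b, (f x ^ 2 + f' x ^ 2)
  have hpt : ∀ x ∈ Icc a b, f y ^ 2 ≤ f x ^ 2 + R := by
    intro x hx
    rcases le_total x y with hxy | hyx
    · linarith [le_abs_self (f y ^ 2 - f x ^ 2), abs_sq_sub_sq_le_integral hf hf' hd hx hy hxy]
    · linarith [neg_abs_le (f x ^ 2 - f y ^ 2), abs_sq_sub_sq_le_integral hf hf' hd hy hx hyx]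
  have hmean : (b - a) * f y ^ 2 ≤ (∫ x in a..b, f x ^ 2) + (b - a) * R := by
    have := integral_mono_on hab.le intervalIntegrable_const (hf2.add intervalIntegrable_const) hpt
    rwa [intervalIntegral.integral_const, integral_add hf2 intervalIntegrable_const,
      intervalIntegral.integral_const, smul_eq_mul, smul_eq_mul] at this
  have hR : R = (∫ x in a..b, f x ^ 2) + ∫ x in a..b, f' x ^ 2 := integral_add hf2 hf'2
  have hba : 0 < b - a := sub_pos.2 hab
  have : f y ^ 2 ≤ (∫ x in a..b, f x ^ 2) / (b - a) + R := by
    rw [← sub_le_iff_le_add, le_div_iff₀ hba]; linarith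
  rw [add_mul, one_mul, inv_mul_eq_div]
  linarith

end Sobolev

section IteratedDerivWithin

variable {𝕜 F : Type*} [NontriviallyNormedField 𝕜] [NormedAddCommGroup F] [NormedSpace 𝕜 F]
  {f : 𝕜 → F} {s t : Set 𝕜} {x : 𝕜}

theorem ContDiffOn.hasDerivWithinAt_iteratedDerivWithin {n : WithTop ℕ∞} {i : ℕ}
    (hf : ContDiffOn 𝕜 n f s) (hi : (i : WithTop ℕ∞) < n) (hs : UniqueDiffOn 𝕜 s) (hx : x ∈ s) :
    HasDerivWithinAt (iteratedDerivWithin i f s) (iteratedDerivWithin (i + 1) f s x) s x := by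
  rw [iteratedDerivWithin_succ]
  exact (hf.differentiableOn_iteratedDerivWithin hi hs x hx).hasDerivWithinAt

theorem iteratedDerivWithin_of_subset {n : ℕ} (hst : s ⊆ t) (hs : UniqueDiffOn 𝕜 s)
    (ht : UniqueDiffOn 𝕜 t) (hf : ContDiffOn 𝕜 n f t) (hx : x ∈ s) :
    iteratedDerivWithin n f s x = iteratedDerivWithin n f t x := by
  simp only [iteratedDerivWithin_eq_iteratedFDerivWithin,
    iteratedFDerivWithin_subset hst hs ht hf hx]

theorem contDiffOn_one_of_hasDerivWithinAt {f' : 𝕜 → F} (hs : UniqueDiffOn 𝕜 s)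
    (hf : ∀ x ∈ s, HasDerivWithinAt f (f' x) s x) (hf' : ContinuousOn f' s) :
    ContDiffOn 𝕜 1 f s :=
  (contDiffOn_one_iff_derivWithin hs).2 ⟨fun x hx => (hf x hx).differentiableWithinAt,
    hf'.congr fun x hx => (hf x hx).derivWithin (hs x hx)⟩

end IteratedDerivWithin

theorem iteratedDerivWithin_comp_add_const_Icc {f : ℝ → ℝ} {m : WithTop ℕ∞} {n : ℕ}
    {a b p q t : ℝ} (hpq : p < q) (hsub : Icc (p + t) (q + t) ⊆ Icc a b)
    (hf : ContDiffOn ℝ m f (Icc a b)) (hn : (n : WithTop ℕ∞) ≤ m) {x : ℝ} (hx : x ∈ Icc p q) :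
    iteratedDerivWithin n (fun y => f (y + t)) (Icc p q) x =
      iteratedDerivWithin n f (Icc a b) (x + t) := by
  have hshift : t +ᵥ Icc p q = Icc (p + t) (q + t) := by
    simp only [← Set.image_vadd, vadd_eq_add, add_comm t, image_add_const_Icc]
  have hab : a < b := by
    have hp := hsub ⟨le_rfl, by linarith⟩
    have hq := hsub ⟨by linarith, le_rfl⟩
    linarith [hp.1, hq.2]
  rw [iteratedDerivWithin_comp_add_const, hshift]
  exact iteratedDerivWithin_of_subset hsub (uniqueDiffOn_Icc (by linarith)) (uniqueDiffOn_Icc hab)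
    (hf.of_le hn) ⟨by linarith [hx.1], by linarith [hx.2]⟩

/-- `c k` is the value at `0` of the `k`-th antiderivative; `c 0` is not used. -/
noncomputable def iterAntideriv (g : ℝ → ℝ) (c : ℕ → ℝ) : ℕ → ℝ → ℝ
  | 0 => g
  | k + 1 => fun x => c (k + 1) + ∫ s in (0 : ℝ)..x, iterAntideriv g c k s

section IterAntideriv

variable {g : ℝ → ℝ} (c : ℕ → ℝ)

@[simp] theorem iterAntideriv_zero : iterAntideriv g c 0 = g := rfl

theorem continuous_iterAntideriv (hg : Continuous g) : ∀ k, Continuous (iterAntideriv g c k)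
  | 0 => hg
  | k + 1 => continuous_const.add (continuous_primitive
      (fun _ _ => (continuous_iterAntideriv hg k).intervalIntegrable _ _) 0)

theorem hasDerivAt_iterAntideriv (hg : Continuous g) (k : ℕ) (x : ℝ) :
    HasDerivAt (iterAntideriv g c (k + 1)) (iterAntideriv g c k x) x :=
  ((continuous_iterAntideriv c hg k).integral_hasStrictDerivAt 0 x).hasDerivAt.const_add _

theorem iteratedDerivWithin_iterAntideriv (hg : Continuous g) {s : Set ℝ} (hs : UniqueDiffOn ℝ s)
    {i k : ℕ} (hik : i ≤ k) {x : ℝ} (hx : x ∈ s) :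
    iteratedDerivWithin i (iterAntideriv g c k) s x = iterAntideriv g c (k - i) x := by
  induction i generalizing x with
  | zero => simp
  | succ i ih =>
    rw [iteratedDerivWithin_succ,
      derivWithin_congr (fun y hy => ih (by omega) hy) (ih (by omega) hx),
      show k - i = k - (i + 1) + 1 by omega]
    exact (hasDerivAt_iterAntideriv c hg _ x).hasDerivWithinAt.derivWithin (hs x hx)

theorem iteratedDerivWithin_succ_iterAntideriv (hg : Continuous g) {s : Set ℝ}
    (hs : UniqueDiffOn ℝ s) (k : ℕ) {x : ℝ} (hx : x ∈ s) :
    iteratedDerivWithin (k + 1) (iterAntideriv g c k) s x = derivWithin g s x := by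
  have htop : EqOn (iteratedDerivWithin k (iterAntideriv g c k) s) g s := fun y hy => by
    simpa using iteratedDerivWithin_iterAntideriv c hg hs le_rfl hy
  rw [iteratedDerivWithin_succ, derivWithin_congr htop (htop hx)]

theorem contDiffOn_iterAntideriv (hg : Continuous g) {s : Set ℝ} (hs : UniqueDiffOn ℝ s)
    {m : ℕ} (hgs : ContDiffOn ℝ m g s) :
    ∀ k : ℕ, ContDiffOn ℝ (k + m : ℕ) (iterAntideriv g c k) s
  | 0 => by simpa using hgs
  | k + 1 => by
    rw [show k + 1 + m = (k + m) + 1 by omega, Nat.cast_succ, contDiffOn_succ_iff_derivWithin hs]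
    refine ⟨fun x _ => (hasDerivAt_iterAntideriv c hg k x).differentiableAt.differentiableWithinAt,
      fun h => absurd h (by simp), (contDiffOn_iterAntideriv hg hs hgs k).congr fun x hx => ?_⟩
    exact (hasDerivAt_iterAntideriv c hg k x).hasDerivWithinAt.derivWithin (hs x hx)

theorem abs_iterAntideriv_le {L B : ℝ} (hL : 0 ≤ L) (hg : ∀ x ∈ Icc 0 L, |g x| ≤ B)
    (hc : ∀ k, |c k| ≤ B) : ∀ k, ∀ x ∈ Icc 0 L, |iterAntideriv g c k x| ≤ (L + 1) ^ k * B
  | 0 => by simpa using hg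
  | k + 1 => fun x hx => by
    have hB : 0 ≤ B := (abs_nonneg _).trans (hc 0)
    have hpow : 1 ≤ (L + 1) ^ k := one_le_pow₀ (by linarith)
    have hbound : ∀ s ∈ uIoc 0 x, ‖iterAntideriv g c k s‖ ≤ (L + 1) ^ k * B := fun s hs => by
      rw [uIoc_of_le hx.1] at hs
      exact abs_iterAntideriv_le hL hg hc k s ⟨hs.1.le, hs.2.trans hx.2⟩
    have hint : |∫ s in (0 : ℝ)..x, iterAntideriv g c k s| ≤ (L + 1) ^ k * B * |x - 0| :=
      norm_integral_le_of_norm_le_const hbound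
    rw [sub_zero, abs_of_nonneg hx.1] at hint
    calc |c (k + 1) + ∫ s in (0 : ℝ)..x, iterAntideriv g c k s|
        ≤ B + (L + 1) ^ k * B * x := (abs_add_le _ _).trans (add_le_add (hc _) hint)
      _ ≤ (L + 1) ^ (k + 1) * B := by
        have hPB : 0 ≤ (L + 1) ^ k * B := by positivity
        rw [pow_succ]
        nlinarith [mul_le_mul_of_nonneg_left hx.2 hPB, mul_le_mul_of_nonneg_right hpow hB]

theorem iterAntideriv_eqOn_iteratedDerivWithin {f : ℝ → ℝ} {a : ℝ} {n : ℕ} (ha : 0 < a)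
    (hf : ContDiffOn ℝ n f (Icc 0 a))
    (hgf : EqOn g (iteratedDerivWithin n f (Icc 0 a)) (Icc 0 a))
    (hc : ∀ k < n, c (k + 1) = iteratedDerivWithin (n - (k + 1)) f (Icc 0 a) 0) :
    ∀ k ≤ n, EqOn (iterAntideriv g c k) (iteratedDerivWithin (n - k) f (Icc 0 a)) (Icc 0 a)
  | 0, _ => by simpa using hgf
  | k + 1, hk => fun x hx => by
    have hs : UniqueDiffOn ℝ (Icc 0 a) := uniqueDiffOn_Icc ha
    have hsub : Icc 0 x ⊆ Icc 0 a := Icc_subset_Icc le_rfl hx.2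
    have ih := iterAntideriv_eqOn_iteratedDerivWithin ha hf hgf hc k (by omega)
    set m := n - (k + 1)
    have hm : n - k = m + 1 := by omega
    have hD : ContinuousOn (iteratedDerivWithin m f (Icc 0 a)) (Icc 0 x) :=
      (hf.continuousOn_iteratedDerivWithin (by exact_mod_cast (by omega : m ≤ n)) hs).mono hsub
    have hD' : ContinuousOn (iteratedDerivWithin (m + 1) f (Icc 0 a)) (Icc 0 x) :=
      (hf.continuousOn_iteratedDerivWithin (by exact_mod_cast (by omega : m + 1 ≤ n)) hs).mono hsub
    have hderiv : ∀ y ∈ Ioo 0 x, HasDerivAt (iteratedDerivWithin m f (Icc 0 a))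
        (iteratedDerivWithin (m + 1) f (Icc 0 a) y) y := fun y hy =>
      (hf.hasDerivWithinAt_iteratedDerivWithin (by exact_mod_cast (by omega : m < n)) hs
        (hsub (Ioo_subset_Icc_self hy))).hasDerivAt (Icc_mem_nhds hy.1 (hy.2.trans_le hx.2))
    show c (k + 1) + ∫ s in (0 : ℝ)..x, iterAntideriv g c k s = _
    rw [hc k hk, integral_congr (ih.mono (uIcc_of_le hx.1 ▸ hsub)), hm,
      integral_eq_sub_of_hasDerivAt_of_le hx.1 hD hderiv (hD'.intervalIntegrable_of_Icc hx.1)]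
    ring

end IterAntideriv

noncomputable def sobolevNormSq (j : ℕ) (L : ℝ) (f : ℝ → ℝ) : ℝ :=
  ∑ i ∈ Finset.range (j + 1), ∫ x in (0 : ℝ)..L, (iteratedDerivWithin i f (Icc 0 L) x) ^ 2

theorem sobolevNormSq_nonneg {j : ℕ} {L : ℝ} (hL : 0 ≤ L) (f : ℝ → ℝ) : 0 ≤ sobolevNormSq j L f :=
  Finset.sum_nonneg fun _ _ => integral_nonneg hL fun _ _ => sq_nonneg _

theorem integral_sq_iteratedDerivWithin_le_sobolevNormSq {j : ℕ} {L : ℝ} (hL : 0 ≤ L) (f : ℝ → ℝ)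
    {i : ℕ} (hi : i ≤ j) :
    ∫ x in (0 : ℝ)..L, (iteratedDerivWithin i f (Icc 0 L) x) ^ 2 ≤ sobolevNormSq j L f :=
  Finset.single_le_sum (f := fun i => ∫ x in (0 : ℝ)..L, (iteratedDerivWithin i f (Icc 0 L) x) ^ 2)
    (fun _ _ => integral_nonneg hL fun _ _ => sq_nonneg _) (Finset.mem_range.2 (by omega))

theorem sq_iteratedDerivWithin_le_sobolevNormSq {j : ℕ} {L : ℝ} (hL : 0 < L) {f : ℝ → ℝ}
    (hf : ContDiffOn ℝ j f (Icc 0 L)) {i : ℕ} (hi : i < j) {y : ℝ} (hy : y ∈ Icc 0 L) :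
    (iteratedDerivWithin i f (Icc 0 L) y) ^ 2 ≤ (L⁻¹ + 2) * sobolevNormSq j L f := by
  have hs := uniqueDiffOn_Icc hL
  have h := sq_le_integral_sq_add_integral_deriv_sq hL
    (hf.continuousOn_iteratedDerivWithin (by exact_mod_cast hi.le) hs)
    (hf.continuousOn_iteratedDerivWithin (by exact_mod_cast hi) hs)
    (fun x hx => (hf.hasDerivWithinAt_iteratedDerivWithin (by exact_mod_cast hi) hs
      (Ioo_subset_Icc_self hx)).hasDerivAt (Icc_mem_nhds hx.1 hx.2)) hy
  rw [sub_zero] at h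
  calc _ ≤ _ := h
    _ ≤ (L⁻¹ + 1) * sobolevNormSq j L f + sobolevNormSq j L f := by
      gcongr
      · exact integral_sq_iteratedDerivWithin_le_sobolevNormSq hL.le f hi.le
      · exact integral_sq_iteratedDerivWithin_le_sobolevNormSq hL.le f hi
    _ = (L⁻¹ + 2) * sobolevNormSq j L f := by ring

theorem integral_sq_iteratedDerivWithin_le_sobolevNormSq_of_le {j : ℕ} {L : ℝ} (hL : 0 < L)
    {f : ℝ → ℝ} (hf : ContDiffOn ℝ j f (Icc 0 L)) {i : ℕ} (hi : i ≤ j) {p q : ℝ} (hp : 0 ≤ p)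
    (hpq : p ≤ q) (hq : q ≤ L) :
    ∫ x in p..q, (iteratedDerivWithin i f (Icc 0 L) x) ^ 2 ≤ sobolevNormSq j L f :=
  (integral_mono_interval hp hpq hq (Filter.Eventually.of_forall fun _ => sq_nonneg _)
    (((hf.continuousOn_iteratedDerivWithin (by exact_mod_cast hi)
      (uniqueDiffOn_Icc hL)).pow 2).intervalIntegrable_of_Icc hL.le)).trans
    (integral_sq_iteratedDerivWithin_le_sobolevNormSq hL.le f hi)

/-- `φ^(n)(x + t)` for `x ≤ T - t` and its mirror image `φ^(n)(2T - t - x)` beyond; the argument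
is clamped to `[0, T]` so that the function is continuous on all of `ℝ`. -/
noncomputable def foldedDeriv (n : ℕ) (T t : ℝ) (φ : ℝ → ℝ) (x : ℝ) : ℝ :=
  iteratedDerivWithin n φ (Icc 0 T) (T - |max 0 (min x T) - (T - t)|)

noncomputable def shiftExtension (n : ℕ) (T t : ℝ) (φ : ℝ → ℝ) : ℝ → ℝ :=
  iterAntideriv (foldedDeriv n T t φ) (fun k => iteratedDerivWithin (n - k) φ (Icc 0 T) t) n

section ShiftExtension

variable {n : ℕ} {T t : ℝ} {φ : ℝ → ℝ}

theorem fold_mem_Icc (ht : t ∈ Icc 0 T) (x : ℝ) :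
    T - |max 0 (min x T) - (T - t)| ∈ Icc 0 T := by
  have hy0 : 0 ≤ max 0 (min x T) := le_max_left _ _
  have hyT : max 0 (min x T) ≤ T := max_le (ht.1.trans ht.2) (min_le_right _ _)
  have habs : |max 0 (min x T) - (T - t)| ≤ T :=
    abs_le.2 ⟨by linarith [ht.1], by linarith [ht.2]⟩
  exact ⟨by linarith, by linarith [abs_nonneg (max 0 (min x T) - (T - t))]⟩

theorem continuous_foldedDeriv (hφ : ContDiffOn ℝ n φ (Icc 0 T)) (ht : t ∈ Ico 0 T) :
    Continuous (foldedDeriv n T t φ) :=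
  (hφ.continuousOn_iteratedDerivWithin le_rfl
    (uniqueDiffOn_Icc (ht.1.trans_lt ht.2))).comp_continuous (by fun_prop)
      (fold_mem_Icc (Ico_subset_Icc_self ht))

theorem foldedDeriv_of_mem_left {x : ℝ} (ht : t ∈ Ico 0 T) (hx : x ∈ Icc 0 (T - t)) :
    foldedDeriv n T t φ x = iteratedDerivWithin n φ (Icc 0 T) (x + t) := by
  have hxT : x ≤ T := by linarith [hx.2, ht.1]
  rw [foldedDeriv, min_eq_left hxT, max_eq_right hx.1, abs_of_nonpos (by linarith [hx.2])]
  ring_nf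

theorem foldedDeriv_of_mem_right {x : ℝ} (ht : t ∈ Ico 0 T) (hx : x ∈ Icc (T - t) T) :
    foldedDeriv n T t φ x = iteratedDerivWithin n φ (Icc 0 T) (2 * T - t - x) := by
  rw [foldedDeriv, min_eq_left hx.2, max_eq_right (by linarith [hx.1, ht.2]),
    abs_of_nonneg (by linarith [hx.1])]
  ring_nf

theorem mapsTo_const_sub_Icc (ht : t ∈ Ico 0 T) :
    MapsTo (fun y => 2 * T - t - y) (Icc (T - t) T) (Icc 0 T) := fun y hy =>
  ⟨by linarith [hy.2, ht.2], by linarith [hy.1]⟩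

theorem hasDerivWithinAt_foldedDeriv (hφ : ContDiffOn ℝ (n + 1 : ℕ) φ (Icc 0 T))
    (ht : t ∈ Ico 0 T) {x : ℝ} (hx : x ∈ Icc (T - t) T) :
    HasDerivWithinAt (foldedDeriv n T t φ)
      (-iteratedDerivWithin (n + 1) φ (Icc 0 T) (2 * T - t - x)) (Icc (T - t) T) x := by
  have hD := (hφ.hasDerivWithinAt_iteratedDerivWithin (by exact_mod_cast n.lt_succ_self)
    (uniqueDiffOn_Icc (ht.1.trans_lt ht.2)) (mapsTo_const_sub_Icc ht hx)).comp x
      ((hasDerivAt_id x).const_sub (2 * T - t)).hasDerivWithinAt (mapsTo_const_sub_Icc ht)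
  rw [mul_neg_one] at hD
  exact hD.congr (fun y hy => foldedDeriv_of_mem_right ht hy) (foldedDeriv_of_mem_right ht hx)

theorem mapsTo_add_const_Icc (ht : t ∈ Ico 0 T) :
    MapsTo (fun x => x + t) (Icc 0 (T - t)) (Icc 0 T) := fun x hx =>
  ⟨by linarith [hx.1, ht.1], by linarith [hx.2]⟩

theorem iteratedDerivWithin_comp_add_const_Icc_sub {m : WithTop ℕ∞}
    (hφ : ContDiffOn ℝ m φ (Icc 0 T)) (ht : t ∈ Ico 0 T) {i : ℕ} (hi : (i : WithTop ℕ∞) ≤ m)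
    {x : ℝ} (hx : x ∈ Icc 0 (T - t)) :
    iteratedDerivWithin i (fun y => φ (y + t)) (Icc 0 (T - t)) x =
      iteratedDerivWithin i φ (Icc 0 T) (x + t) :=
  iteratedDerivWithin_comp_add_const_Icc (sub_pos.2 ht.2)
    (Icc_subset_Icc (by linarith [ht.1]) (by linarith)) hφ hi hx

theorem shiftExtension_eqOn (hφ : ContDiffOn ℝ n φ (Icc 0 T)) (ht : t ∈ Ico 0 T) :
    EqOn (shiftExtension n T t φ) (fun x => φ (x + t)) (Icc 0 (T - t)) := by
  have hf : ContDiffOn ℝ n (fun y => φ (y + t)) (Icc 0 (T - t)) :=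
    hφ.comp (contDiffOn_id.add contDiffOn_const) (mapsTo_add_const_Icc ht)
  simpa [shiftExtension] using iterAntideriv_eqOn_iteratedDerivWithin (g := foldedDeriv n T t φ) _
    (sub_pos.2 ht.2) hf
    (fun x hx => (foldedDeriv_of_mem_left ht hx).trans
      (iteratedDerivWithin_comp_add_const_Icc_sub hφ ht le_rfl hx).symm)
    (fun k hk => by
      simpa using (iteratedDerivWithin_comp_add_const_Icc_sub hφ ht
        (by exact_mod_cast Nat.sub_le n (k + 1)) ⟨le_rfl, (sub_pos.2 ht.2).le⟩).symm)
    n le_rfl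

theorem iteratedDerivWithin_shiftExtension_left (hφ : ContDiffOn ℝ (n + 1 : ℕ) φ (Icc 0 T))
    (ht : t ∈ Ico 0 T) {i : ℕ} (hi : i ≤ n + 1) {x : ℝ} (hx : x ∈ Icc 0 (T - t)) :
    iteratedDerivWithin i (shiftExtension n T t φ) (Icc 0 (T - t)) x =
      iteratedDerivWithin i φ (Icc 0 T) (x + t) := by
  rw [iteratedDerivWithin_congr (shiftExtension_eqOn (hφ.of_le (by simp)) ht) hx]
  exact iteratedDerivWithin_comp_add_const_Icc_sub hφ ht (by exact_mod_cast hi) hx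

theorem contDiffOn_shiftExtension (hφ : ContDiffOn ℝ n φ (Icc 0 T)) (ht : t ∈ Ico 0 T) :
    ContDiffOn ℝ n (shiftExtension n T t φ) (Icc 0 T) := by
  have hg := continuous_foldedDeriv hφ ht
  simpa [shiftExtension] using contDiffOn_iterAntideriv _ hg
    (uniqueDiffOn_Icc (ht.1.trans_lt ht.2)) (m := 0) (contDiffOn_zero.2 hg.continuousOn) n

theorem contDiffOn_shiftExtension_left (hφ : ContDiffOn ℝ (n + 1 : ℕ) φ (Icc 0 T))
    (ht : t ∈ Ico 0 T) :
    ContDiffOn ℝ (n + 1 : ℕ) (shiftExtension n T t φ) (Icc 0 (T - t)) :=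
  (hφ.comp (contDiffOn_id.add contDiffOn_const) (mapsTo_add_const_Icc ht)).congr
    (shiftExtension_eqOn (hφ.of_le (by simp)) ht)

theorem contDiffOn_shiftExtension_right (hφ : ContDiffOn ℝ (n + 1 : ℕ) φ (Icc 0 T))
    (ht : t ∈ Ico 0 T) :
    ContDiffOn ℝ (n + 1 : ℕ) (shiftExtension n T t φ) (Icc (T - t) T) := by
  rcases ht.1.eq_or_lt with rfl | ht0
  · rw [sub_zero, Icc_self]
    exact fun x hx => hx ▸ contDiffWithinAt_singleton
  have hs : UniqueDiffOn ℝ (Icc (T - t) T) := uniqueDiffOn_Icc (by linarith)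
  have hg1 : ContDiffOn ℝ 1 (foldedDeriv n T t φ) (Icc (T - t) T) :=
    contDiffOn_one_of_hasDerivWithinAt hs (fun x hx => hasDerivWithinAt_foldedDeriv hφ ht hx)
      ((hφ.continuousOn_iteratedDerivWithin le_rfl (uniqueDiffOn_Icc (by linarith [ht.2]))).comp
        (by fun_prop) (mapsTo_const_sub_Icc ht)).neg
  simpa [shiftExtension] using contDiffOn_iterAntideriv _
    (continuous_foldedDeriv (hφ.of_le (by simp)) ht) hs (m := 1) (by simpa using hg1) n

theorem iteratedDerivWithin_shiftExtension_right (hφ : ContDiffOn ℝ (n + 1 : ℕ) φ (Icc 0 T))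
    (ht : t ∈ Ico 0 T) (ht0 : 0 < t) {x : ℝ} (hx : x ∈ Icc (T - t) T) :
    iteratedDerivWithin (n + 1) (shiftExtension n T t φ) (Icc (T - t) T) x =
      -iteratedDerivWithin (n + 1) φ (Icc 0 T) (2 * T - t - x) := by
  have hs : UniqueDiffOn ℝ (Icc (T - t) T) := uniqueDiffOn_Icc (by linarith)
  rw [shiftExtension, iteratedDerivWithin_succ_iterAntideriv _
    (continuous_foldedDeriv (hφ.of_le (by simp)) ht) hs n hx]
  exact (hasDerivWithinAt_foldedDeriv hφ ht hx).derivWithin (hs x hx)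

theorem abs_iterAntideriv_foldedDeriv_le (hφ : ContDiffOn ℝ (n + 1 : ℕ) φ (Icc 0 T))
    (ht : t ∈ Ico 0 T) (k : ℕ) {x : ℝ} (hx : x ∈ Icc 0 T) :
    |iterAntideriv (foldedDeriv n T t φ) (fun k => iteratedDerivWithin (n - k) φ (Icc 0 T) t) k x|
      ≤ (T + 1) ^ k * √((T⁻¹ + 2) * sobolevNormSq (n + 1) T φ) := by
  have hT : 0 < T := ht.1.trans_lt ht.2
  have hbound : ∀ i ≤ n, ∀ y ∈ Icc 0 T,
      |iteratedDerivWithin i φ (Icc 0 T) y| ≤ √((T⁻¹ + 2) * sobolevNormSq (n + 1) T φ) :=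
    fun i hi y hy => Real.abs_le_sqrt (sq_iteratedDerivWithin_le_sobolevNormSq hT hφ (by omega) hy)
  exact abs_iterAntideriv_le _ hT.le
    (fun y _ => hbound n le_rfl _ (fold_mem_Icc (Ico_subset_Icc_self ht) y))
    (fun k => hbound _ (Nat.sub_le n k) t ⟨ht.1, ht.2.le⟩) k x hx

theorem integral_sq_iteratedDerivWithin_shiftExtension_left_le
    (hφ : ContDiffOn ℝ (n + 1 : ℕ) φ (Icc 0 T)) (ht : t ∈ Ico 0 T) {i : ℕ} (hi : i ≤ n + 1) :
    ∫ x in (0 : ℝ)..(T - t), (iteratedDerivWithin i (shiftExtension n T t φ) (Icc 0 (T - t)) x) ^ 2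
      ≤ sobolevNormSq (n + 1) T φ := by
  set P := iteratedDerivWithin i φ (Icc 0 T)
  calc _ = ∫ x in (0 : ℝ)..(T - t), P (x + t) ^ 2 := integral_congr fun x hx => by
        rw [uIcc_of_le (sub_pos.2 ht.2).le] at hx
        simp only [iteratedDerivWithin_shiftExtension_left hφ ht hi hx, P]
    _ = ∫ x in t..T, P x ^ 2 := by
        rw [integral_comp_add_right (fun x => P x ^ 2), zero_add, sub_add_cancel]
    _ ≤ sobolevNormSq (n + 1) T φ :=
        integral_sq_iteratedDerivWithin_le_sobolevNormSq_of_le (ht.1.trans_lt ht.2) hφ hi ht.1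
          ht.2.le le_rfl

theorem integral_sq_iteratedDerivWithin_shiftExtension_right_le_of_le
    (hφ : ContDiffOn ℝ (n + 1 : ℕ) φ (Icc 0 T)) (ht : t ∈ Ico 0 T) (ht0 : 0 < t) {i : ℕ}
    (hi : i ≤ n) :
    ∫ x in (T - t)..T, (iteratedDerivWithin i (shiftExtension n T t φ) (Icc (T - t) T) x) ^ 2
      ≤ (T + 1) ^ (2 * n) * (1 + 2 * T) * sobolevNormSq (n + 1) T φ := by
  have hT : 0 < T := ht.1.trans_lt ht.2
  have hS := sobolevNormSq_nonneg (j := n + 1) hT.le φ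
  have hs : UniqueDiffOn ℝ (Icc (T - t) T) := uniqueDiffOn_Icc (by linarith)
  have hg := continuous_foldedDeriv (n := n) (hφ.of_le (by simp)) ht
  set H := iterAntideriv (foldedDeriv n T t φ)
    (fun k => iteratedDerivWithin (n - k) φ (Icc 0 T) t) (n - i)
  set M := (T + 1) ^ n * √((T⁻¹ + 2) * sobolevNormSq (n + 1) T φ)
  have hH : ∀ x ∈ Icc (T - t) T, H x ^ 2 ≤ M ^ 2 := fun x hx => by
    have hpow : (T + 1) ^ (n - i) ≤ (T + 1) ^ n := pow_le_pow_right₀ (by linarith) (Nat.sub_le n i)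
    have hHx := abs_iterAntideriv_foldedDeriv_le hφ ht (n - i) ⟨by linarith [hx.1, ht.2], hx.2⟩
    rw [← sq_abs]
    exact pow_le_pow_left₀ (abs_nonneg _)
      (hHx.trans (mul_le_mul_of_nonneg_right hpow (Real.sqrt_nonneg _))) 2
  calc _ = ∫ x in (T - t)..T, H x ^ 2 := integral_congr fun x hx => by
        rw [uIcc_of_le (by linarith)] at hx
        simp only [shiftExtension, iteratedDerivWithin_iterAntideriv _ hg hs hi hx, H]
    _ ≤ ∫ x in (T - t)..T, M ^ 2 :=
        integral_mono_on (by linarith)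
          (((continuous_iterAntideriv _ hg _).pow 2).intervalIntegrable _ _)
          intervalIntegrable_const hH
    _ = t * M ^ 2 := by simp
    _ ≤ T * M ^ 2 := by gcongr; exact ht.2.le
    _ = (T + 1) ^ (2 * n) * (1 + 2 * T) * sobolevNormSq (n + 1) T φ := by
        rw [mul_pow, Real.sq_sqrt (by positivity), ← pow_mul]
        field_simp
        ring

theorem integral_sq_iteratedDerivWithin_shiftExtension_right_top_le
    (hφ : ContDiffOn ℝ (n + 1 : ℕ) φ (Icc 0 T)) (ht : t ∈ Ico 0 T) (ht0 : 0 < t) :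
    ∫ x in (T - t)..T, (iteratedDerivWithin (n + 1) (shiftExtension n T t φ) (Icc (T - t) T) x) ^ 2
      ≤ sobolevNormSq (n + 1) T φ := by
  set P := iteratedDerivWithin (n + 1) φ (Icc 0 T)
  calc _ = ∫ x in (T - t)..T, P (2 * T - t - x) ^ 2 := integral_congr fun x hx => by
        rw [uIcc_of_le (by linarith)] at hx
        simp only [iteratedDerivWithin_shiftExtension_right hφ ht ht0 hx, neg_sq, P]
    _ = ∫ x in (T - t)..T, P x ^ 2 := by
        rw [integral_comp_sub_left (fun x => P x ^ 2)]
        ring_nf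
    _ ≤ sobolevNormSq (n + 1) T φ :=
        integral_sq_iteratedDerivWithin_le_sobolevNormSq_of_le (ht.1.trans_lt ht.2) hφ le_rfl
          (by linarith [ht.2]) (by linarith) le_rfl

theorem integral_sq_iteratedDerivWithin_shiftExtension_right_le
    (hφ : ContDiffOn ℝ (n + 1 : ℕ) φ (Icc 0 T)) (ht : t ∈ Ico 0 T) {i : ℕ} (hi : i ≤ n + 1) :
    ∫ x in (T - t)..T, (iteratedDerivWithin i (shiftExtension n T t φ) (Icc (T - t) T) x) ^ 2
      ≤ (T + 1) ^ (2 * n) * (1 + 2 * T) * sobolevNormSq (n + 1) T φ := by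
  have hT : 0 < T := ht.1.trans_lt ht.2
  have hS := sobolevNormSq_nonneg (j := n + 1) hT.le φ
  rcases ht.1.eq_or_lt with rfl | ht0
  · rw [sub_zero, integral_same]
    positivity
  rcases hi.lt_or_eq with hi | rfl
  · exact integral_sq_iteratedDerivWithin_shiftExtension_right_le_of_le hφ ht ht0 (by omega)
  calc _ ≤ sobolevNormSq (n + 1) T φ :=
        integral_sq_iteratedDerivWithin_shiftExtension_right_top_le hφ ht ht0
    _ ≤ _ := le_mul_of_one_le_left hS
        (one_le_mul_of_one_le_of_one_le (one_le_pow₀ (by linarith)) (by linarith))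

end ShiftExtension

/-- Shift-extension lemma (Lemma 4.3): the shift `x ↦ φ(x+t)`, defined on
`[0, T*−t]`, extends to a function `ψ` on `[0, T*]` which is `C^{j-1}` globally,
`C^j` on each of `[0, T*−t]` and `[T*−t, T*]`, and whose (piecewise) Sobolev
`W^j`-norm is bounded by a constant (depending only on `T*` and `j`) times that
of `φ`, uniformly in the shift `t`. -/
theorem stmt2 (j : ℕ) (hj : 1 ≤ j) (Tstar : ℝ) (hT : 0 < Tstar) :
    ∃ c > (0:ℝ), ∀ t ∈ Set.Ico (0:ℝ) Tstar, ∀ φ : ℝ → ℝ,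
      ContDiffOn ℝ j φ (Set.Icc 0 Tstar) →
      ∃ ψ : ℝ → ℝ,
        (∀ x ∈ Set.Icc (0:ℝ) (Tstar - t), ψ x = φ (x + t)) ∧
        ContDiffOn ℝ (j - 1 : ℕ) ψ (Set.Icc 0 Tstar) ∧
        ContDiffOn ℝ j ψ (Set.Icc 0 (Tstar - t)) ∧
        ContDiffOn ℝ j ψ (Set.Icc (Tstar - t) Tstar) ∧
        ∑ i ∈ Finset.range (j + 1),
            ((∫ x in (0:ℝ)..(Tstar - t),
                (iteratedDerivWithin i ψ (Set.Icc 0 (Tstar - t)) x) ^ 2)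
              + ∫ x in (Tstar - t)..Tstar,
                  (iteratedDerivWithin i ψ (Set.Icc (Tstar - t) Tstar) x) ^ 2)
          ≤ c * ∑ i ∈ Finset.range (j + 1),
                ∫ x in (0:ℝ)..Tstar,
                  (iteratedDerivWithin i φ (Set.Icc 0 Tstar) x) ^ 2 := by
  obtain ⟨n, rfl⟩ := Nat.exists_eq_add_of_le' hj
  set K := 1 + (Tstar + 1) ^ (2 * n) * (1 + 2 * Tstar)
  refine ⟨(n + 2) * K, by positivity, fun t ht φ hφ => ⟨shiftExtension n Tstar t φ,
    shiftExtension_eqOn (hφ.of_le (by simp)) ht,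
    by simpa using contDiffOn_shiftExtension (hφ.of_le (by simp)) ht,
    contDiffOn_shiftExtension_left hφ ht, contDiffOn_shiftExtension_right hφ ht, ?_⟩⟩
  calc _ ≤ ∑ _i ∈ Finset.range (n + 1 + 1), K * sobolevNormSq (n + 1) Tstar φ :=
        Finset.sum_le_sum fun i hi => by
          have hi : i ≤ n + 1 := Nat.lt_succ_iff.1 (Finset.mem_range.1 hi)
          linarith [integral_sq_iteratedDerivWithin_shiftExtension_left_le hφ ht hi,
            integral_sq_iteratedDerivWithin_shiftExtension_right_le hφ ht hi]
    _ = _ := by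
        rw [Finset.sum_const, Finset.card_range, nsmul_eq_mul, sobolevNormSq]
        push_cast
        ring
end

section
/- Let T > 0 and T* > 0. Let a : ℝ × ℝ → ℝ be continuously differentiable and let h, n : ℝ × ℝ → ℝ be continuous. Assume that for all (x, t) ∈ [0, T*] × [0, T]: (i) ∂₁a(x, t) + ∂₂a(x, t) = −a(x, t)·h(x, t); (ii) a(0, t) = ∫_0^{T*} n(x, t)·a(x, t) dx; and (iii) a(T*, t) = 0. Then for every continuously differentiable f : ℝ → ℝ and every t ∈ [0, T], ∫_0^{T*} f(x) a(x, t) dx = ∫_0^{T*} f(x) a(x, 0) dx + ∫_0^t ( ∫_0^{T*} ( f'(x) − h(x, s) f(x) ) a(x, s) dx + f(0) · ∫_0^{T*} n(x, s) a(x, s) dx ) ds. -/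
/-!
Differentiate `τ ↦ ∫ f(x) a(x,τ) dx` under the integral sign, replace `∂₂a` by `-a h - ∂₁a`
using the transport equation, and move `∂₁` onto `f` by integration by parts. The boundary
terms are `f(0) a(0,s) - f(T*) a(T*,s)`: the renewal condition turns the first into
`f(0) ∫ n a`, the second vanishes, and the fundamental theorem of calculus in `τ` gives the
weak form.
-/

open MeasureTheory Set Metric

section

variable {E : Type*} [NormedAddCommGroup E] [NormedSpace ℝ E]

theorem HasFDerivAt.hasDerivAt_slice_fst {a : ℝ × ℝ → E} {a' : ℝ × ℝ →L[ℝ] E} {x τ : ℝ}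
    (h : HasFDerivAt a a' (x, τ)) : HasDerivAt (fun x => a (x, τ)) (a' (1, 0)) x :=
  h.comp_hasDerivAt x ((hasDerivAt_id x).prodMk (hasDerivAt_const x τ))

theorem HasFDerivAt.hasDerivAt_slice_snd {a : ℝ × ℝ → E} {a' : ℝ × ℝ →L[ℝ] E} {x τ : ℝ}
    (h : HasFDerivAt a a' (x, τ)) : HasDerivAt (fun τ => a (x, τ)) (a' (0, 1)) τ :=
  h.comp_hasDerivAt τ ((hasDerivAt_const τ x).prodMk (hasDerivAt_id τ))

theorem hasDerivAt_intervalIntegral_of_continuous_partialDeriv {G G' : ℝ × ℝ → E}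
    (hG : Continuous G) (hG' : Continuous G')
    (hderiv : ∀ x τ, HasDerivAt (fun τ => G (x, τ)) (G' (x, τ)) τ) (α β s : ℝ) :
    HasDerivAt (fun τ => ∫ x in α..β, G (x, τ)) (∫ x in α..β, G' (x, s)) s := by
  obtain ⟨C, hC⟩ : ∃ C, ∀ p ∈ uIcc α β ×ˢ closedBall s 1, ‖G' p‖ ≤ C :=
    (isCompact_uIcc.prod (isCompact_closedBall s 1)).exists_bound_of_continuousOn
      hG'.continuousOn
  have hslice (H : ℝ × ℝ → E) (hH : Continuous H) (τ : ℝ) : Continuous fun x => H (x, τ) := by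
    fun_prop
  refine (intervalIntegral.hasDerivAt_integral_of_dominated_loc_of_deriv_le
    (bound := fun _ => C) (ball_mem_nhds s one_pos)
    (.of_forall fun τ => (hslice G hG τ).aestronglyMeasurable)
    ((hslice G hG s).intervalIntegrable _ _) (hslice G' hG' s).aestronglyMeasurable ?_
    intervalIntegrable_const (ae_of_all _ fun x _ τ _ => hderiv x τ)).2
  exact ae_of_all _ fun x hx τ hτ =>
    hC (x, τ) ⟨uIoc_subset_uIcc hx, ball_subset_closedBall hτ⟩

end

theorem hasDerivAt_integral_mul_of_transport {α β s : ℝ} (hαβ : α ≤ β) {a h : ℝ × ℝ → ℝ}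
    (ha : ContDiff ℝ 1 a) (hh : Continuous h) {f : ℝ → ℝ} (hf : ContDiff ℝ 1 f)
    (hpde : ∀ x ∈ Icc α β,
      fderiv ℝ a (x, s) (1, 0) + fderiv ℝ a (x, s) (0, 1) = -(a (x, s) * h (x, s))) :
    HasDerivAt (fun τ => ∫ x in α..β, f x * a (x, τ))
      ((∫ x in α..β, (deriv f x - h (x, s) * f x) * a (x, s))
        + f α * a (α, s) - f β * a (β, s)) s := by
  have haC : Continuous a := ha.continuous
  have hDa : Continuous (fderiv ℝ a) := ha.continuous_fderiv one_ne_zero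
  have hfC : Continuous f := hf.continuous
  have hf'C : Continuous (deriv f) := hf.continuous_deriv le_rfl
  have hda (p : ℝ × ℝ) : HasFDerivAt a (fderiv ℝ a p) p :=
    (ha.differentiable one_ne_zero p).hasFDerivAt
  have htime := hasDerivAt_intervalIntegral_of_continuous_partialDeriv
    (G := fun p => f p.1 * a p) (G' := fun p => f p.1 * fderiv ℝ a p (0, 1))
    (by fun_prop) (by fun_prop) (fun x τ => (hda (x, τ)).hasDerivAt_slice_snd.const_mul (f x))
    α β s
  have hparts : ∫ x in α..β, f x * fderiv ℝ a (x, s) (1, 0)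
      = f β * a (β, s) - f α * a (α, s) - ∫ x in α..β, deriv f x * a (x, s) :=
    intervalIntegral.integral_mul_deriv_eq_deriv_mul
      (fun x _ => (hf.differentiable one_ne_zero x).hasDerivAt)
      (fun x _ => (hda (x, s)).hasDerivAt_slice_fst)
      (hf'C.intervalIntegrable _ _)
      ((by fun_prop : Continuous fun x => fderiv ℝ a (x, s) (1, 0)).intervalIntegrable _ _)
  have hpde' : ∀ x ∈ uIcc α β, f x * fderiv ℝ a (x, s) (0, 1)
      = -(f x * fderiv ℝ a (x, s) (1, 0)) - h (x, s) * f x * a (x, s) := by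
    intro x hx
    rw [uIcc_of_le hαβ] at hx
    linear_combination f x * hpde x hx
  refine htime.congr_deriv ?_
  rw [intervalIntegral.integral_congr hpde', intervalIntegral.integral_sub,
    intervalIntegral.integral_neg, hparts]
  simp only [sub_mul]
  rw [intervalIntegral.integral_sub]
  · ring
  all_goals exact Continuous.intervalIntegrable (by fun_prop) _ _

theorem stmt8_general (T Tstar : ℝ) (hTs : 0 < Tstar)
    (a h n : ℝ × ℝ → ℝ) (ha : ContDiff ℝ 1 a) (hh : Continuous h) (hn : Continuous n)
    (hpde : ∀ x ∈ Set.Icc (0:ℝ) Tstar, ∀ t ∈ Set.Icc (0:ℝ) T,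
      fderiv ℝ a (x, t) (1, 0) + fderiv ℝ a (x, t) (0, 1) = -(a (x, t) * h (x, t)))
    (hbc : ∀ t ∈ Set.Icc (0:ℝ) T,
      a (0, t) = ∫ x in (0:ℝ)..Tstar, n (x, t) * a (x, t))
    (hend : ∀ t ∈ Set.Icc (0:ℝ) T, a (Tstar, t) = 0)
    (f : ℝ → ℝ) (hf : ContDiff ℝ 1 f) (t : ℝ) (htT : t ∈ Set.Icc (0:ℝ) T) :
    ∫ x in (0:ℝ)..Tstar, f x * a (x, t)
      = (∫ x in (0:ℝ)..Tstar, f x * a (x, 0))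
        + ∫ s in (0:ℝ)..t,
            ((∫ x in (0:ℝ)..Tstar, (deriv f x - h (x, s) * f x) * a (x, s))
              + f 0 * ∫ x in (0:ℝ)..Tstar, n (x, s) * a (x, s)) := by
  have hderiv : ∀ s ∈ uIcc 0 t, HasDerivAt (fun τ => ∫ x in (0:ℝ)..Tstar, f x * a (x, τ))
      ((∫ x in (0:ℝ)..Tstar, (deriv f x - h (x, s) * f x) * a (x, s))
        + f 0 * ∫ x in (0:ℝ)..Tstar, n (x, s) * a (x, s)) s := by
    intro s hs
    rw [uIcc_of_le htT.1] at hs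
    have hsT : s ∈ Icc 0 T := ⟨hs.1, hs.2.trans htT.2⟩
    refine (hasDerivAt_integral_mul_of_transport hTs.le ha hh hf
      (fun x hx => hpde x hx s hsT)).congr_deriv ?_
    rw [hend s hsT, ← hbc s hsT, mul_zero, sub_zero]
  have haC : Continuous a := ha.continuous
  have hf'C : Continuous (deriv f) := hf.continuous_deriv le_rfl
  have hfC : Continuous f := hf.continuous
  rw [intervalIntegral.integral_eq_sub_of_hasDerivAt hderiv
    (Continuous.intervalIntegrable (by fun_prop) _ _)]
  ring

/-- McKendrick–von Foerster equation implies its weak (test-function) form: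
if the density `a(x,t)` satisfies `∂₁a + ∂₂a = −a·h` on `[0,T*]×[0,T]`, the
renewal boundary condition `a(0,t) = ∫₀^{T*} n(x,t)a(x,t)dx`, and `a(T*,t) = 0`,
then for every `C¹` test function `f` and `t ∈ [0,T]`,
`(f, a(·,t)) = (f, a(·,0)) + ∫₀^t ((f' − h f, a(·,s)) + f(0)(n, a(·,s))) ds`. -/
theorem stmt8 (T Tstar : ℝ) (hT : 0 < T) (hTs : 0 < Tstar)
    (a h n : ℝ × ℝ → ℝ) (ha : ContDiff ℝ 1 a) (hh : Continuous h) (hn : Continuous n)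
    (hpde : ∀ x ∈ Set.Icc (0:ℝ) Tstar, ∀ t ∈ Set.Icc (0:ℝ) T,
      fderiv ℝ a (x, t) (1, 0) + fderiv ℝ a (x, t) (0, 1) = -(a (x, t) * h (x, t)))
    (hbc : ∀ t ∈ Set.Icc (0:ℝ) T,
      a (0, t) = ∫ x in (0:ℝ)..Tstar, n (x, t) * a (x, t))
    (hend : ∀ t ∈ Set.Icc (0:ℝ) T, a (Tstar, t) = 0)
    (f : ℝ → ℝ) (hf : ContDiff ℝ 1 f) (t : ℝ) (htT : t ∈ Set.Icc (0:ℝ) T) :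
    ∫ x in (0:ℝ)..Tstar, f x * a (x, t)
      = (∫ x in (0:ℝ)..Tstar, f x * a (x, 0))
        + ∫ s in (0:ℝ)..t,
            ((∫ x in (0:ℝ)..Tstar, (deriv f x - h (x, s) * f x) * a (x, s))
              + f 0 * ∫ x in (0:ℝ)..Tstar, n (x, s) * a (x, s)) :=
  stmt8_general T Tstar hTs a h n ha hh hn hpde hbc hend f hf t htT
end

section
/- Let h, n, λ, t be real numbers with λ ≠ n and t ≥ 0. Let z₀ : ℝ → ℝ be integrable with z₀(x) = 0 for x < 0, and suppose x ↦ e^{λx} z₀(x) is integrable. Set V₀ = ∫_ℝ z₀(x) dx and define z_t : ℝ → ℝ by z_t(x) = e^{−ht}·z₀(x − t)·𝟙[x > t] + n·V₀·e^{(n−h)t}·e^{−nx}·𝟙[0 ≤ x ≤ t]. Then ∫_ℝ e^{λx} z_t(x) dx = e^{−ht}·( e^{λt}·∫_ℝ e^{λx} z₀(x) dx + (n/(n − λ))·(e^{nt} − e^{λt})·V₀ ). -/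
open MeasureTheory

/-- The explicit density of the expected fluctuation measure in the classical
case reproduces the exponential transform: with
`z_t(x) = e^{−ht}z₀(x−t)𝟙[x>t] + n·V₀·e^{(n−h)t}e^{−nx}𝟙[0 ≤ x ≤ t]`,
`V₀ = ∫ z₀`, one has
`∫ e^{λx}z_t(x)dx = e^{−ht}(e^{λt}∫ e^{λx}z₀(x)dx + n/(n−λ)(e^{nt}−e^{λt})V₀)`. -/
theorem stmt13 (h n lam t : ℝ) (hln : lam ≠ n) (ht : 0 ≤ t)
    (z₀ : ℝ → ℝ) (hz₀int : Integrable z₀)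
    (hz₀supp : ∀ x < (0:ℝ), z₀ x = 0)
    (hexpint : Integrable (fun x => Real.exp (lam * x) * z₀ x)) :
    (∫ x : ℝ, Real.exp (lam * x) *
        (Real.exp (-h * t) * z₀ (x - t) * (if t < x then 1 else 0)
          + n * (∫ y : ℝ, z₀ y) * Real.exp ((n - h) * t) * Real.exp (-n * x) *
              (if 0 ≤ x ∧ x ≤ t then 1 else 0)))
      = Real.exp (-h * t) *
          (Real.exp (lam * t) * (∫ x : ℝ, Real.exp (lam * x) * z₀ x)
            + n / (n - lam) * (Real.exp (n * t) - Real.exp (lam * t)) *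
                ∫ y : ℝ, z₀ y) := by
  have hc : lam - n ≠ 0 := sub_ne_zero.mpr hln
  set V₀ := ∫ y : ℝ, z₀ y with hV
  set C : ℝ := n * V₀ * Real.exp ((n - h) * t) with hC
  -- the first summand a.e. equals a nice function
  have hne : ∀ᵐ x : ℝ, x ≠ t := by
    refine MeasureTheory.ae_iff.mpr ?_
    simpa using Real.volume_singleton (a := t)
  have h1ae : (fun x : ℝ => Real.exp (lam * x) *
        (Real.exp (-h * t) * z₀ (x - t) * (if t < x then 1 else 0)))
      =ᵐ[volume] fun x => Real.exp (-h * t) * (Real.exp (lam * x) * z₀ (x - t)) := by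
    filter_upwards [hne] with x hx
    rcases lt_trichotomy x t with hlt | heq | hgt
    · rw [if_neg (by linarith), hz₀supp _ (by linarith)]; ring
    · exact absurd heq hx
    · rw [if_pos hgt]; ring
  have hg1 : Integrable (fun x : ℝ => Real.exp (lam * x) * z₀ (x - t)) := by
    have h2 := (hexpint.comp_sub_right t).const_mul (Real.exp (lam * t))
    refine h2.congr (Filter.Eventually.of_forall fun x => ?_)
    dsimp only
    rw [← mul_assoc, ← Real.exp_add]
    ring_nf
  have hint1 : Integrable (fun x : ℝ => Real.exp (lam * x) *
      (Real.exp (-h * t) * z₀ (x - t) * (if t < x then 1 else 0))) :=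
    (hg1.const_mul _).congr h1ae.symm
  -- the second summand is an indicator
  have h2eq : (fun x : ℝ => Real.exp (lam * x) *
        (n * V₀ * Real.exp ((n - h) * t) * Real.exp (-n * x) *
          (if 0 ≤ x ∧ x ≤ t then 1 else 0)))
      = Set.indicator (Set.Icc 0 t) (fun x => C * Real.exp ((lam - n) * x)) := by
    funext x
    rw [Set.indicator_apply]
    simp only [Set.mem_Icc]
    by_cases hx : 0 ≤ x ∧ x ≤ t
    · rw [if_pos hx, if_pos hx, hC,
        show (lam - n) * x = lam * x + -n * x by ring, Real.exp_add]
      ring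
    · rw [if_neg hx, if_neg hx]; ring
  have hint2 : Integrable (fun x : ℝ => Real.exp (lam * x) *
      (n * V₀ * Real.exp ((n - h) * t) * Real.exp (-n * x) *
        (if 0 ≤ x ∧ x ≤ t then 1 else 0))) := by
    rw [h2eq]
    exact ((Continuous.integrableOn_Icc (by continuity)).integrable_indicator
      measurableSet_Icc)
  simp only [mul_add]
  rw [integral_add hint1 hint2, integral_congr_ae h1ae, h2eq,
    integral_indicator measurableSet_Icc, integral_Icc_eq_integral_Ioc,
    ← intervalIntegral.integral_of_le ht]
  -- first integral
  have hI1 : (∫ x : ℝ, Real.exp (-h * t) * (Real.exp (lam * x) * z₀ (x - t)))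
      = Real.exp (-h * t) * (Real.exp (lam * t) * ∫ x : ℝ, Real.exp (lam * x) * z₀ x) := by
    rw [MeasureTheory.integral_const_mul]
    congr 1
    have : (fun x : ℝ => Real.exp (lam * x) * z₀ (x - t))
        = fun x => Real.exp (lam * t) * (Real.exp (lam * (x - t)) * z₀ (x - t)) := by
      funext x; rw [← mul_assoc, ← Real.exp_add]; ring_nf
    rw [this, MeasureTheory.integral_const_mul,
      integral_sub_right_eq_self (fun y : ℝ => Real.exp (lam * y) * z₀ y) t]
  -- second integral
  have hI2 : (∫ x in (0:ℝ)..t, C * Real.exp ((lam - n) * x))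
      = C * ((Real.exp ((lam - n) * t) - 1) / (lam - n)) := by
    rw [intervalIntegral.integral_const_mul]
    congr 1
    have := intervalIntegral.integral_comp_mul_left (a := 0) (b := t)
      (fun x => Real.exp x) hc
    simp only [mul_zero] at this
    rw [this, integral_exp, Real.exp_zero, smul_eq_mul]
    field_simp
  have hnl : n - lam ≠ 0 := sub_ne_zero.mpr hln.symm
  rw [hI1, hI2, hC]
  simp only [sub_mul, Real.exp_sub, neg_mul, Real.exp_neg]
  field_simp
  ring
end
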